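/- arXiv:2110.13120 — 2 statements merged into one kernel-verified Lean document; each statement's English description precedes it below -/
import Mathlib

section
/- Let M be a vertically 4-connected matroid, let X be a subset of E(M) such that the restriction M|X is isomorphic to the 2-sum U_{2,4} ⊕₂ U_{2,4}, and let x be an element of X. Then M \ x is vertically 4-connected. -/
open Set Matroid

universe u

variable {α : Type u}

/-- The rank of a set `X` in a matroid `M`: the supremum of the cardinalities of the
independent subsets of `X`. -/
noncomputable def mrk (M : Matroid α) (X : Set α) : ℕ∞ :=
  ⨆ I ∈ {I : Set α | M.Indep I ∧ I ⊆ X}, I.encard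

/-- The rank `r(M)` of a matroid `M`. -/
noncomputable def mrank (M : Matroid α) : ℕ∞ := mrk M M.E

/-- The connectivity function `λ_M(X) = r(X) + r(E(M) - X) - r(M)`. -/
noncomputable def lam (M : Matroid α) (X : Set α) : ℕ∞ :=
  mrk M X + mrk M (M.E \ X) - mrank M

/-- The deletion `M \ D` of a set of elements `D` from `M`. -/
def mdel (M : Matroid α) (D : Set α) : Matroid α := M ↾ (M.E \ D)

/-- A circuit of a matroid: a minimal dependent set. -/
def MCircuit (M : Matroid α) (C : Set α) : Prop := M.Dep C ∧ ∀ D, D ⊂ C → M.Indep D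

/-- A cocircuit of a matroid: a circuit of the dual matroid. -/
def MCocircuit (M : Matroid α) (C : Set α) : Prop := MCircuit M✶ C

/-- A triangle: a 3-element circuit. -/
def IsTriangle (M : Matroid α) (T : Set α) : Prop := MCircuit M T ∧ T.encard = 3

/-- `(X, Y)` is a vertical `j`-separation of `M`: a partition of `E(M)` with
`λ_M(X) < j` and `min {r(X), r(Y)} ≥ j`. -/
def IsVSep (M : Matroid α) (j : ℕ) (X Y : Set α) : Prop :=
  X ∪ Y = M.E ∧ Disjoint X Y ∧ lam M X < (j : ℕ∞) ∧
    (j : ℕ∞) ≤ mrk M X ∧ (j : ℕ∞) ≤ mrk M Y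

/-- An exact vertical `j`-separation: one with `λ_M(X) = j - 1`. -/
def IsExactVSep (M : Matroid α) (j : ℕ) (X Y : Set α) : Prop :=
  IsVSep M j X Y ∧ lam M X = (j : ℕ∞) - 1

/-- `M` is vertically `k`-connected: it has no vertical `j`-separation for a
positive integer `j < k`. -/
def VertConn (M : Matroid α) (k : ℕ) : Prop :=
  ∀ j X Y, 0 < j → j < k → ¬ IsVSep M j X Y

/-- `(X, Y)` is a (Tutte) `j`-separation of `M`. -/
def IsSep (M : Matroid α) (j : ℕ) (X Y : Set α) : Prop :=
  X ∪ Y = M.E ∧ Disjoint X Y ∧ lam M X < (j : ℕ∞) ∧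
    (j : ℕ∞) ≤ X.encard ∧ (j : ℕ∞) ≤ Y.encard

/-- `M` is (Tutte) `k`-connected. -/
def TConn (M : Matroid α) (k : ℕ) : Prop :=
  ∀ j X Y, 0 < j → j < k → ¬ IsSep M j X Y

/-- `M` is minimally vertically 4-connected. -/
def MinVertConn4 (M : Matroid α) : Prop :=
  VertConn M 4 ∧ ∀ e ∈ M.E, ¬ VertConn (mdel M {e}) 4

/-- `M` is a simple matroid: every subset of the ground set with at most two
elements is independent (no loops and no parallel pairs). -/
def MSimple (M : Matroid α) : Prop := ∀ S ⊆ M.E, S.encard ≤ 2 → M.Indep S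

/-- `M` has a restriction isomorphic to `U_{2,4}`: a 4-element subset of the ground set
of rank 2, all of whose subsets with at most 2 elements are independent. -/
def HasU24Restriction (M : Matroid α) : Prop :=
  ∃ X ⊆ M.E, X.encard = 4 ∧ mrk M X = 2 ∧ ∀ S ⊆ X, S.encard ≤ 2 → M.Indep S

/-- The restriction `M|X` is isomorphic to `U_{2,4}`. -/
def RestrIsoU24 (M : Matroid α) (X : Set α) : Prop :=
  X ⊆ M.E ∧ X.encard = 4 ∧ mrk M X = 2 ∧ ∀ S ⊆ X, S.encard ≤ 2 → M.Indep S

/-- The restriction `M|C` is isomorphic to `U_{2,k} ⊕ U_{2,2}`: `C` is the disjoint union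
of a `k`-element rank-2 set `L` containing no loops or parallel pairs (a copy of `U_{2,k}`)
and a 2-element independent set `P` (a copy of `U_{2,2}`), with `r(C) = r(L) + r(P) = 4`,
so that the restriction is the direct sum of the two pieces. -/
def RestrIsoLinePlusPair (M : Matroid α) (C : Set α) (k : ℕ) : Prop :=
  ∃ L P, C = L ∪ P ∧ Disjoint L P ∧ L.encard = (k : ℕ∞) ∧ P.encard = 2 ∧
    M.Indep P ∧ mrk M L = 2 ∧ (∀ S ⊆ L, S.encard ≤ 2 → M.Indep S) ∧ mrk M C = 4

/-- The restriction `M|X` is isomorphic to the 2-sum `U_{2,4} ⊕₂ U_{2,4}`: `X` is the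
disjoint union of two 3-element circuits `T₁` and `T₂`, and the circuits of `M` contained
in `X` (i.e. the circuits of `M|X`) are exactly `T₁`, `T₂`, and the unions `P₁ ∪ P₂` of
2-element subsets `P₁ ⊆ T₁` and `P₂ ⊆ T₂`. -/
def RestrIsoTwoSumU24U24 (M : Matroid α) (X : Set α) : Prop :=
  X ⊆ M.E ∧ ∃ T₁ T₂ : Set α, Disjoint T₁ T₂ ∧ X = T₁ ∪ T₂ ∧
    T₁.encard = 3 ∧ T₂.encard = 3 ∧
    ∀ C ⊆ X, (MCircuit M C ↔ (C = T₁ ∨ C = T₂ ∨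
      ∃ P₁ P₂, P₁ ⊆ T₁ ∧ P₂ ⊆ T₂ ∧ P₁.encard = 2 ∧ P₂.encard = 2 ∧ C = P₁ ∪ P₂))

/-- The columns of the `GF(3)`-matrix representing `N₉`. -/
def N9Cols : Fin 9 → Fin 4 → ZMod 3 :=
  ![![1, 0, 0, 0], ![0, 1, 0, 0], ![0, 0, 1, 0], ![0, 0, 0, 1], ![0, 1, 1, -1],
    ![1, 0, 1, 1], ![1, 1, 0, 1], ![-1, 1, 1, 0], ![1, -1, 1, -1]]

/-- `M` is isomorphic to `N₉`, the 9-element rank-4 matroid represented over `GF(3)`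
by the matrix with columns `N9Cols`. -/
def IsoN9 (M : Matroid α) : Prop :=
  ∃ φ : α → Fin 9, Set.BijOn φ M.E Set.univ ∧
    ∀ I ⊆ M.E, (M.Indep I ↔ LinearIndependent (ZMod 3) fun x : I => N9Cols (φ x.1))

/-- `M` is binary: representable over the two-element field `GF(2)`, i.e. there is a
map from the ground set to a `GF(2)`-vector space under which independence in `M`
coincides with linear independence. -/
def IsBinary (M : Matroid α) : Prop :=
  ∃ (ι : Type u) (φ : α → ι → ZMod 2),
    ∀ I ⊆ M.E, (M.Indep I ↔ LinearIndependent (ZMod 2) fun x : I => φ x.1)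

/-- `M` is a uniform matroid, i.e. isomorphic to `U_{m,n}` for some `m` and `n`:
the ground set has `n` elements and a subset of the ground set is independent
exactly when it has at most `m` elements. -/
def IsUniform (M : Matroid α) : Prop :=
  ∃ m n : ℕ, M.E.encard = (n : ℕ∞) ∧ ∀ I ⊆ M.E, (M.Indep I ↔ I.encard ≤ (m : ℕ∞))


/-!
If `(A, B)` is a vertical `j`-separation of `M \ x`, then `x` is spanned by `A` or by `B`,
and adding `x` to that side changes neither its rank nor `r(M)`, so it yields a vertical
`j`-separation of `M`. The spanning comes from the 2-sum: `x` lies in a triangle `T₁`, and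
two elements of the other triangle `T₂` lie on a common side; if that side also meets
`T₁ - x` in some `a`, then `{x, a}` together with those two elements is a circuit spanning
`x` from that side, and otherwise `T₁ - x` lies on the other side.
-/

lemma mrk_eq_eRk (M : Matroid α) (X : Set α) : mrk M X = M.eRk X := by
  refine le_antisymm (iSup₂_le fun I hI ↦ hI.1.encard_le_eRk_of_subset hI.2) ?_
  obtain ⟨I, hI⟩ := M.exists_isBasis' X
  exact hI.encard_eq_eRk ▸ le_iSup₂_of_le I ⟨hI.indep, hI.subset⟩ le_rfl

lemma mrank_eq_eRank (M : Matroid α) : mrank M = M.eRank := by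
  rw [mrank, mrk_eq_eRk, eRk_ground]

lemma mrk_mdel (M : Matroid α) {D S : Set α} (hS : S ⊆ M.E \ D) :
    mrk (mdel M D) S = mrk M S := by
  rw [mrk_eq_eRk, mrk_eq_eRk, mdel, restrict_eRk_eq _ hS]

lemma eRk_insert_eq_of_mem_closure {M : Matroid α} {X : Set α} {e : α}
    (he : e ∈ M.closure X) : M.eRk (insert e X) = M.eRk X := by
  rw [← eRk_closure_eq, closure_insert_eq_of_mem_closure he, eRk_closure_eq]

lemma MCircuit.isCircuit {M : Matroid α} {C : Set α} (hC : MCircuit M C) : M.IsCircuit C :=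
  isCircuit_iff_forall_ssubset.mpr ⟨hC.1, fun _ hI ↦ hC.2 _ hI⟩

lemma IsVSep.symm {M : Matroid α} {j : ℕ} {A B : Set α} (h : IsVSep M j A B) :
    IsVSep M j B A := by
  obtain ⟨hU, hD, hl, hA, hB⟩ := h
  have hEA : M.E \ A = B := by rw [← hU, union_sdiff_left, hD.symm.sdiff_eq_left]
  have hEB : M.E \ B = A := by rw [← hU, union_sdiff_right, hD.sdiff_eq_left]
  refine ⟨union_comm B A ▸ hU, hD.symm, ?_, hB, hA⟩
  rwa [lam, hEB, add_comm, ← hEA]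

lemma IsVSep.insert_of_mdel {M : Matroid α} {x : α} {j : ℕ} {A B : Set α}
    (h : IsVSep (mdel M {x}) j A B) (hxA : x ∈ M.closure A) :
    IsVSep M j (insert x A) B := by
  obtain ⟨hU, hD, hl, hA, hB⟩ := h
  change A ∪ B = M.E \ {x} at hU
  have hxE : x ∈ M.E := mem_ground_of_mem_closure hxA
  have hAx : A ⊆ M.E \ {x} := hU ▸ subset_union_left
  have hBx : B ⊆ M.E \ {x} := hU ▸ subset_union_right
  have hxB : x ∉ B := fun h ↦ (hBx h).2 rfl
  have hrkA : mrk M (insert x A) = mrk M A := by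
    rw [mrk_eq_eRk, mrk_eq_eRk, eRk_insert_eq_of_mem_closure hxA]
  have hrank : mrank (mdel M {x}) = mrank M := by
    have hx : x ∈ M.closure (M.E \ {x}) := M.closure_subset_closure hAx hxA
    rw [mrank, show (mdel M {x}).E = M.E \ {x} from rfl, mrk_mdel M subset_rfl, mrank_eq_eRank,
      mrk_eq_eRk, ← eRk_ground, ← eRk_insert_eq_of_mem_closure hx, insert_sdiff_singleton, insert_eq_self.mpr hxE]
  have hlam : lam M (insert x A) = lam (mdel M {x}) A := by
    have hcompl : M.E \ insert x A = (mdel M {x}).E \ A := by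
      rw [← singleton_union, ← sdiff_sdiff]; rfl
    have hcomplB : (mdel M {x}).E \ A = B := by
      change (M.E \ {x}) \ A = B
      rw [← hU, union_sdiff_left, hD.symm.sdiff_eq_left]
    rw [lam, lam, hcompl, hrkA, hrank, mrk_mdel M hAx, hcomplB, mrk_mdel M hBx]
  refine ⟨?_, disjoint_insert_left.mpr ⟨hxB, hD⟩, hlam ▸ hl, ?_, ?_⟩
  · rw [insert_union, hU, insert_sdiff_singleton, insert_eq_self.mpr hxE]
  · rwa [hrkA, ← mrk_mdel M hAx]
  · rwa [← mrk_mdel M hBx]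

lemma exists_pair_subset_of_encard_eq_three {T A B : Set α} (hT : T.encard = 3)
    (hTAB : T ⊆ A ∪ B) : ∃ P ⊆ T, P.encard = 2 ∧ (P ⊆ A ∨ P ⊆ B) := by
  have h3 : 3 ≤ (T ∩ A).encard + (T ∩ B).encard := by
    calc (3 : ℕ∞) = (T ∩ A ∪ T ∩ B).encard := by
          rw [← inter_union_distrib_left, inter_eq_self_of_subset_left hTAB, hT]
      _ ≤ _ := encard_union_le _ _
  have h2 : 2 ≤ (T ∩ A).encard ∨ 2 ≤ (T ∩ B).encard := by
    by_contra! h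
    have hA : (T ∩ A).encard ≤ 1 := Order.le_of_lt_add_one h.1
    have hB : (T ∩ B).encard ≤ 1 := Order.le_of_lt_add_one h.2
    have := (add_le_add hA hB).trans' h3
    norm_num at this
  rcases h2 with h2 | h2
  · obtain ⟨P, hP, hP2⟩ := exists_subset_encard_eq h2
    exact ⟨P, hP.trans inter_subset_left, hP2, .inl (hP.trans inter_subset_right)⟩
  · obtain ⟨P, hP, hP2⟩ := exists_subset_encard_eq h2
    exact ⟨P, hP.trans inter_subset_left, hP2, .inr (hP.trans inter_subset_right)⟩

section TwoSum

variable {M : Matroid α} {T₁ T₂ A B : Set α} {x : α}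

lemma mem_closure_or_of_pair_subset {P : Set α} (hT₁ : M.IsCircuit T₁)
    (hcross : ∀ P₁ ⊆ T₁, ∀ P₂ ⊆ T₂, P₁.encard = 2 → P₂.encard = 2 → M.IsCircuit (P₁ ∪ P₂))
    (hxT₁ : x ∈ T₁) (hT₁AB : T₁ \ {x} ⊆ A ∪ B) (hPT₂ : P ⊆ T₂) (hP : P.encard = 2)
    (hPA : P ⊆ A) : x ∈ M.closure A ∨ x ∈ M.closure B := by
  by_cases h : ∃ a ∈ T₁ \ {x}, a ∈ A
  · obtain ⟨a, ⟨haT₁, hax⟩, haA⟩ := h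
    have hC : M.IsCircuit ({x, a} ∪ P) :=
      hcross _ (pair_subset hxT₁ haT₁) P hPT₂ (encard_pair (Ne.symm hax)) hP
    refine .inl (M.closure_subset_closure ?_
      (hC.mem_closure_sdiff_singleton_of_mem (.inl (.inl rfl))))
    rintro z ⟨(rfl | rfl) | hz, hzx⟩
    exacts [absurd rfl hzx, haA, hPA hz]
  · push Not at h
    refine .inr (M.closure_subset_closure (fun z hz ↦ ?_)
      (hT₁.mem_closure_sdiff_singleton_of_mem hxT₁))
    exact (hT₁AB hz).resolve_left (h z hz)

lemma mem_closure_or_of_encard_eq_three (hT₁ : M.IsCircuit T₁)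
    (hcross : ∀ P₁ ⊆ T₁, ∀ P₂ ⊆ T₂, P₁.encard = 2 → P₂.encard = 2 → M.IsCircuit (P₁ ∪ P₂))
    (hxT₁ : x ∈ T₁) (hT₂ : T₂.encard = 3) (hT₁AB : T₁ \ {x} ⊆ A ∪ B) (hT₂AB : T₂ ⊆ A ∪ B) :
    x ∈ M.closure A ∨ x ∈ M.closure B := by
  obtain ⟨P, hPT₂, hP, hPA | hPB⟩ := exists_pair_subset_of_encard_eq_three hT₂ hT₂AB
  · exact mem_closure_or_of_pair_subset hT₁ hcross hxT₁ hT₁AB hPT₂ hP hPA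
  · exact (mem_closure_or_of_pair_subset hT₁ hcross hxT₁ (union_comm A B ▸ hT₁AB) hPT₂ hP
      hPB).symm

lemma RestrIsoTwoSumU24U24.exists_isCircuit {X : Set α} (hX : RestrIsoTwoSumU24U24 M X)
    (hx : x ∈ X) : ∃ T₁ T₂, x ∈ T₁ ∧ T₂ ⊆ M.E \ {x} ∧ T₂.encard = 3 ∧ M.IsCircuit T₁ ∧
      ∀ P₁ ⊆ T₁, ∀ P₂ ⊆ T₂, P₁.encard = 2 → P₂.encard = 2 → M.IsCircuit (P₁ ∪ P₂) := by
  obtain ⟨hXE, T₁, T₂, hdisj, rfl, h₁, h₂, hC⟩ := hX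
  have circ {C : Set α} (hCX : C ⊆ T₁ ∪ T₂) (h : C = T₁ ∨ C = T₂ ∨ ∃ P₁ P₂, P₁ ⊆ T₁ ∧
      P₂ ⊆ T₂ ∧ P₁.encard = 2 ∧ P₂.encard = 2 ∧ C = P₁ ∪ P₂) : M.IsCircuit C :=
    ((hC C hCX).mpr h).isCircuit
  rcases hx with hx | hx
  · refine ⟨T₁, T₂, hx, fun z hz ↦ ⟨hXE (.inr hz), ?_⟩, h₂, circ subset_union_left (.inl rfl),
      fun P₁ hP₁ P₂ hP₂ e₁ e₂ ↦
        circ (union_subset_union hP₁ hP₂) (.inr (.inr ⟨P₁, P₂, hP₁, hP₂, e₁, e₂, rfl⟩))⟩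
    rintro rfl
    exact hdisj.notMem_of_mem_left hx hz
  · refine ⟨T₂, T₁, hx, fun z hz ↦ ⟨hXE (.inl hz), ?_⟩, h₁,
      circ subset_union_right (.inr (.inl rfl)), fun P₂ hP₂ P₁ hP₁ e₂ e₁ ↦ ?_⟩
    · rintro rfl
      exact hdisj.notMem_of_mem_right hx hz
    · rw [union_comm]
      exact circ (union_subset_union hP₁ hP₂) (.inr (.inr ⟨P₁, P₂, hP₁, hP₂, e₁, e₂, rfl⟩))

end TwoSum

/-- If `M` is a vertically 4-connected matroid, `X ⊆ E(M)` with `M|X ≅ U_{2,4} ⊕₂ U_{2,4}`,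
and `x ∈ X`, then `M \ x` is vertically 4-connected. -/
theorem statement_6 (M : Matroid α) (hM : VertConn M 4) (X : Set α)
    (hX : RestrIsoTwoSumU24U24 M X) (x : α) (hx : x ∈ X) :
    VertConn (mdel M {x}) 4 := by
  intro j A B hj hj4 hsep
  obtain ⟨T₁, T₂, hxT₁, hT₂E, hT₂, hT₁, hcross⟩ := hX.exists_isCircuit hx
  have hU : A ∪ B = M.E \ {x} := hsep.1
  rcases mem_closure_or_of_encard_eq_three hT₁ hcross hxT₁ hT₂
      (hU ▸ sdiff_subset_sdiff_left hT₁.subset_ground) (hU ▸ hT₂E) with hxA | hxB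
  · exact hM j _ _ hj hj4 (hsep.insert_of_mdel hxA)
  · exact hM j _ _ hj hj4 (hsep.symm.insert_of_mdel hxB)
end

section
/- Let M be a matroid with a triangle T = {a,b,c}, and let (X_a, Y_a) and (X_b, Y_b) be exact vertical 3-separations of M \ a and M \ b, respectively, with b ∈ X_a and a ∈ X_b. Then λ_{M\{a,b}}(Y_a ∩ Y_b) + λ_{M\{a,b}}(X_a ∩ X_b) ≤ 4, and λ_{M\{a,b}}(X_a ∩ Y_b) + λ_{M\{a,b}}(X_b ∩ Y_a) ≤ 4. -/
open Set Matroid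

universe u

variable {α : Type u}

/-! Deleting elements cannot increase connectivity, so `λ_{M\{a,b}}(Y_a) ≤ λ_{M\a}(X_a) = 2`
and `λ_{M\{a,b}}(Y_b) ≤ 2`. Both inequalities are then submodularity of `λ_{M\{a,b}}`, applied
to `Y_a, Y_b` and to `E - Y_a, Y_b`, combined with `λ(X) = λ(E - X)`. -/

namespace Matroid

variable {M : Matroid α}

lemma mrk_eq_eRk (M : Matroid α) (X : Set α) : mrk M X = M.eRk X := by
  refine le_antisymm (iSup₂_le fun I hI => hI.1.encard_le_eRk_of_subset hI.2) ?_
  obtain ⟨I, hI⟩ := M.exists_isBasis' X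
  rw [← hI.encard_eq_eRk]
  exact le_biSup _ ⟨hI.indep, hI.subset⟩

lemma mdel_eq_delete (M : Matroid α) (D : Set α) : mdel M D = M ＼ D := rfl

lemma lam_eq (M : Matroid α) (X : Set α) :
    lam M X = M.eRk X + M.eRk (M.E \ X) - M.eRank := by
  simp only [lam, mrank, mrk_eq_eRk, eRk_ground]

lemma lam_add_eRank (M : Matroid α) (X : Set α) :
    lam M X + M.eRank = M.eRk X + M.eRk (M.E \ X) := by
  refine lam_eq M X ▸ tsub_add_cancel_of_le ?_
  calc M.eRank = M.eRk (X ∪ (M.E \ X)) := by rw [union_sdiff_self, eRk_union_ground]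
    _ ≤ M.eRk X + M.eRk (M.E \ X) := M.eRk_union_le_eRk_add_eRk _ _

lemma lam_compl (M : Matroid α) (X : Set α) : lam M (M.E \ X) = lam M X := by
  rw [lam_eq, lam_eq, sdiff_sdiff_right_self, eRk_ground_inter, add_comm]

/-- With truncated subtraction in `ℕ∞`, `lam` vanishes identically when `M` has infinite rank. -/
lemma rankFinite_of_lam_ne_zero {X : Set α} (h : lam M X ≠ 0) : M.RankFinite := by
  rw [← eRank_ne_top_iff]
  intro htop
  rw [lam_eq, htop, ENat.sub_top] at h
  exact h rfl

lemma lam_inter_add_lam_union_le [M.RankFinite] (A B : Set α) :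
    lam M (A ∩ B) + lam M (A ∪ B) ≤ lam M A + lam M B := by
  have hr : M.eRank + M.eRank ≠ ⊤ := by simp [M.eRank_ne_top_iff.2 ‹_›]
  refine (ENat.add_le_add_iff_right hr).1 ?_
  calc lam M (A ∩ B) + lam M (A ∪ B) + (M.eRank + M.eRank)
      = (M.eRk (A ∩ B) + M.eRk (A ∪ B))
          + (M.eRk (M.E \ (A ∪ B)) + M.eRk (M.E \ (A ∩ B))) := by
        rw [add_add_add_comm, lam_add_eRank, lam_add_eRank]; ring
    _ ≤ (M.eRk A + M.eRk B) + (M.eRk (M.E \ A) + M.eRk (M.E \ B)) :=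
        add_le_add (M.eRk_submod A B) (M.eRk_compl_union_add_eRk_compl_inter_le A B)
    _ = lam M A + lam M B + (M.eRank + M.eRank) := by
        rw [add_add_add_comm (lam M A), lam_add_eRank, lam_add_eRank]; ring

lemma lam_delete_le [M.RankFinite] (D X : Set α) : lam (M ＼ D) X ≤ lam M X := by
  set E' := M.E \ D
  have hdel : lam (M ＼ D) X + M.eRk E' = M.eRk (X ∩ E') + M.eRk (E' \ X) := by
    rw [← eRank_restrict, ← delete_eq_restrict, lam_add_eRank, delete_eq_restrict,
      restrict_eRk_eq', restrict_eRk_eq', restrict_ground_eq,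
      inter_eq_self_of_subset_left sdiff_subset]
  have hS1 := M.eRk_submod X E'
  have hS2 := M.eRk_submod (M.E \ X) (X ∪ E')
  rw [show (M.E \ X) ∩ (X ∪ E') = E' \ X by
      ext; simp only [E', mem_inter_iff, mem_sdiff, mem_union]; tauto,
    eRk_eq_eRank (X := M.E \ X ∪ (X ∪ E')) fun x _ ↦ by by_cases x ∈ X <;> simp_all] at hS2
  have hK : M.eRk E' + M.eRk (X ∪ E') + M.eRank ≠ ⊤ := by
    simp [M.eRank_ne_top_iff.2 ‹_›]
  refine (ENat.add_le_add_iff_right hK).1 ?_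
  calc lam (M ＼ D) X + (M.eRk E' + M.eRk (X ∪ E') + M.eRank)
      = (M.eRk (X ∩ E') + M.eRk (X ∪ E')) + (M.eRk (E' \ X) + M.eRank) := by
        rw [← add_assoc, ← add_assoc, hdel]; ring
    _ ≤ (M.eRk X + M.eRk E') + (M.eRk (M.E \ X) + M.eRk (X ∪ E')) := add_le_add hS1 hS2
    _ = (M.eRk X + M.eRk (M.E \ X)) + (M.eRk E' + M.eRk (X ∪ E')) := by ring
    _ = lam M X + (M.eRk E' + M.eRk (X ∪ E') + M.eRank) := by rw [← lam_add_eRank]; ring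

lemma lam_inter_add_lam_compl_union_le [M.RankFinite] (A B : Set α) :
    lam M (A ∩ B) + lam M (M.E \ (A ∪ B)) ≤ lam M A + lam M B := by
  rw [lam_compl]
  exact lam_inter_add_lam_union_le A B

lemma lam_delete_le_of_partition [M.RankFinite] {X Y : Set α} (hU : X ∪ Y = M.E)
    (hD : Disjoint X Y) (D : Set α) : lam (M ＼ D) Y ≤ lam M X := by
  have hY : Y = M.E \ X := by rw [← hU, union_sdiff_left, hD.symm.sdiff_eq_left]
  rw [← lam_compl M X, ← hY]
  exact lam_delete_le D Y

end Matroid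

theorem statement_11_general (M : Matroid α) (a b : α)
    (Xa Ya Xb Yb : Set α)
    (ha : IsExactVSep (mdel M {a}) 3 Xa Ya) (hb : IsExactVSep (mdel M {b}) 3 Xb Yb) :
    lam (mdel M {a, b}) (Ya ∩ Yb) + lam (mdel M {a, b}) (Xa ∩ Xb) ≤ 4 ∧
    lam (mdel M {a, b}) (Xa ∩ Yb) + lam (mdel M {a, b}) (Xb ∩ Ya) ≤ 4 := by
  obtain ⟨⟨hUa, hDa, -⟩, hLa⟩ := ha
  obtain ⟨⟨hUb, hDb, -⟩, hLb⟩ := hb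
  simp only [mdel_eq_delete] at hUa hUb hLa hLb ⊢
  replace hLa : lam (M ＼ {a}) Xa = 2 := hLa
  replace hLb : lam (M ＼ {b}) Xb = 2 := hLb
  have := rankFinite_of_lam_ne_zero (hLa ▸ two_ne_zero)
  have := rankFinite_of_lam_ne_zero (hLb ▸ two_ne_zero)
  have hNa : M ＼ {a, b} = M ＼ {a} ＼ {b} := by rw [delete_delete, singleton_union]
  have hNb : M ＼ {a, b} = M ＼ {b} ＼ {a} := by rw [delete_delete, singleton_union, pair_comm]
  have hYa : lam (M ＼ {a, b}) Ya ≤ 2 := hNa ▸ hLa ▸ lam_delete_le_of_partition hUa hDa {b}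
  have hYb : lam (M ＼ {a, b}) Yb ≤ 2 := hNb ▸ hLb ▸ lam_delete_le_of_partition hUb hDb {a}
  have : (M ＼ {a, b}).RankFinite := hNa ▸ inferInstance
  set N := M ＼ {a, b}
  obtain ⟨hXX, hXY, hYX⟩ : Xa ∩ Xb = N.E \ (Ya ∪ Yb) ∧ Xa ∩ Yb = (N.E \ Ya) ∩ Yb ∧
      Xb ∩ Ya = N.E \ ((N.E \ Ya) ∪ Yb) := by
    rw [disjoint_left] at hDa hDb
    simp only [N, delete_ground, Set.ext_iff, mem_union, mem_sdiff, mem_singleton_iff,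
      mem_inter_iff, mem_insert_iff] at hUa hUb ⊢
    refine ⟨fun x => ?_, fun x => ?_, fun x => ?_⟩ <;> grind
  have h4 : (2 + 2 : ℕ∞) = 4 := by norm_num
  constructor
  · rw [hXX, ← h4]
    exact (lam_inter_add_lam_compl_union_le Ya Yb).trans (add_le_add hYa hYb)
  · rw [hXY, hYX, ← h4]
    exact (lam_inter_add_lam_compl_union_le _ Yb).trans
      (add_le_add ((lam_compl N Ya).trans_le hYa) hYb)

/-- In the setting of the technical lemma (for an arbitrary matroid `M`), the uncrossing
inequalities for the connectivity function of `M \ {a,b}` hold. -/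
theorem statement_11 (M : Matroid α) (a b c : α) (hT : IsTriangle M {a, b, c})
    (Xa Ya Xb Yb : Set α)
    (ha : IsExactVSep (mdel M {a}) 3 Xa Ya) (hb : IsExactVSep (mdel M {b}) 3 Xb Yb)
    (hbXa : b ∈ Xa) (haXb : a ∈ Xb) :
    lam (mdel M {a, b}) (Ya ∩ Yb) + lam (mdel M {a, b}) (Xa ∩ Xb) ≤ 4 ∧
    lam (mdel M {a, b}) (Xa ∩ Yb) + lam (mdel M {a, b}) (Xb ∩ Ya) ≤ 4 :=
  statement_11_general M a b Xa Ya Xb Yb ha hb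
end
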